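/- arXiv:1612.03246 — 11 statements merged into one kernel-verified Lean document; each statement's English description precedes it below -/
import Mathlib

section
/- Suppose m ≥ 1 and t_m ≥ 0. Then there exists a feasible collection of m paths V*_1, …, V*_m whose cost is at most the cost of every feasible collection of m paths, and which moreover satisfies: for every i, the leftmost viewpoint min V*_i equals b x for some target x ∈ X, and the rightmost viewpoint max V*_i either equals a y for some target y ∈ X or equals min V*_i. (Optimal paths may be assumed to start at right endpoints and end at left endpoints of target visibility intervals.) -/
/-!
Slide every viewpoint rightwards to the nearest right endpoint `b x` among the targets it
sees: it still sees them, the start of the path does not move left, and the number of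
viewpoints does not grow. Then let `α` be the largest left endpoint of the targets seen. All
viewpoints `≥ α` can be merged into the single viewpoint `max α (start)`, which still sees
their targets, and `α` is at most the original end of the path. The resulting canonical paths
have their viewpoints among the finitely many interval endpoints, so a cheapest feasible
collection of canonical paths exists, and it is cheapest among all feasible collections.
-/

open Set

namespace IntervalVisibility

variable {X : Type*} (a b : X → ℝ)

def Sees (S : Finset ℝ) (x : X) : Prop := ∃ v ∈ S, a x ≤ v ∧ v ≤ b x

noncomputable def pathCost (tm : ℝ) (S : Finset ℝ) : ℝ :=
  sSup (S : Set ℝ) - sInf (S : Set ℝ) + S.card * tm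

theorem pathCost_eq (tm : ℝ) {S : Finset ℝ} (hS : S.Nonempty) :
    pathCost tm S = S.max' hS - S.min' hS + S.card * tm := by
  rw [pathCost, hS.csSup_eq_max', hS.csInf_eq_min']

/-- The nearest right endpoint among the targets seen from `v` (junk `sInf ∅ = 0` if there are
none). -/
noncomputable def slide (v : ℝ) : ℝ := sInf (b '' {x | a x ≤ v ∧ v ≤ b x})

section slide

variable {a b} [Finite X] {v : ℝ} {x : X}

theorem exists_eq_slide (hx : a x ≤ v ∧ v ≤ b x) :
    ∃ y, (a y ≤ v ∧ v ≤ b y) ∧ slide a b v = b y :=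
  (Set.Nonempty.csInf_mem ⟨b x, mem_image_of_mem b hx⟩ ((toFinite _).image b)).imp
    fun _ h => ⟨h.1, h.2.symm⟩

theorem le_slide (hx : a x ≤ v ∧ v ≤ b x) : v ≤ slide a b v := by
  obtain ⟨y, hy, hyv⟩ := exists_eq_slide hx
  exact hyv ▸ hy.2

theorem slide_le (hx : a x ≤ v ∧ v ≤ b x) : slide a b v ≤ b x :=
  csInf_le ((toFinite _).image b).bddBelow (mem_image_of_mem b hx)

end slide

theorem exists_path_of_right_endpoints [Finite X] (S : Finset ℝ) :
    ∃ P : Finset ℝ, (P : Set ℝ) ⊆ range b ∧ (∀ w ∈ P, ∃ v ∈ S, v ≤ w) ∧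
      (∀ x, Sees a b S x → Sees a b P x) ∧ P.card ≤ S.card := by
  classical
  refine ⟨(S.filter fun v => ∃ x, a x ≤ v ∧ v ≤ b x).image (slide a b), ?_, ?_, ?_, ?_⟩
  · simp only [Finset.coe_image, Finset.coe_filter]
    rintro _ ⟨v, ⟨-, x, hx⟩, rfl⟩
    obtain ⟨y, -, hy⟩ := exists_eq_slide hx
    exact ⟨y, hy.symm⟩
  · simp only [Finset.mem_image, Finset.mem_filter]
    rintro _ ⟨v, ⟨hv, x, hx⟩, rfl⟩
    exact ⟨v, hv, le_slide hx⟩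
  · rintro x ⟨v, hv, hx⟩
    exact ⟨slide a b v, Finset.mem_image_of_mem _ (Finset.mem_filter.2 ⟨hv, x, hx⟩),
      hx.1.trans (le_slide hx), slide_le hx⟩
  · exact Finset.card_image_le.trans (Finset.card_filter_le _ _)

/-- Merge all viewpoints of `P` at or beyond `α`, the largest left endpoint of the targets in
`Y`, into the single viewpoint `max α (P.min' hP)`. -/
theorem exists_path_ending_at_max_left_endpoint (P : Finset ℝ) (hP : P.Nonempty)
    (Y : Finset X) (hY : Y.Nonempty) (hPY : ∀ x ∈ Y, Sees a b P x) :
    ∃ (T : Finset ℝ) (hT : T.Nonempty), T ⊆ insert (Y.sup' hY a) P ∧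
      (∀ x ∈ Y, Sees a b T x) ∧ T.min' hT = P.min' hP ∧
      T.max' hT = max (Y.sup' hY a) (P.min' hP) ∧ T.card ≤ P.card := by
  classical
  set α := Y.sup' hY a
  set L := P.min' hP
  set T := insert (max α L) (P.filter (· < α))
  have hlt : ∀ w ∈ T, w ≤ max α L := by
    simp only [T, Finset.mem_insert, Finset.mem_filter]
    rintro w (rfl | ⟨-, hw⟩)
    exacts [le_rfl, le_max_of_le_left hw.le]
  have hL : L ∈ T := by
    rcases lt_or_ge L α with h | h
    · exact Finset.mem_insert_of_mem (Finset.mem_filter.2 ⟨P.min'_mem hP, h⟩)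
    · simp [T, max_eq_right h]
  refine ⟨T, ⟨L, hL⟩, ?_, ?_, ?_, ?_, ?_⟩
  · refine Finset.insert_subset ?_ (Finset.filter_subset _ _ |>.trans (Finset.subset_insert _ _))
    rcases max_choice α L with h | h <;> rw [h]
    exacts [Finset.mem_insert_self _ _, Finset.mem_insert_of_mem (P.min'_mem hP)]
  · intro x hx
    obtain ⟨w, hw, hxw⟩ := hPY x hx
    by_cases hwα : w < α
    · exact ⟨w, Finset.mem_insert_of_mem (Finset.mem_filter.2 ⟨hw, hwα⟩), hxw⟩
    · refine ⟨max α L, Finset.mem_insert_self _ _, ?_, ?_⟩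
      · exact le_max_of_le_left (Finset.le_sup' a hx)
      · exact (max_le (not_lt.1 hwα) (P.min'_le w hw)).trans hxw.2
  · refine le_antisymm (Finset.min'_le _ _ hL) (Finset.le_min' _ _ _ ?_)
    simp only [T, Finset.mem_insert, Finset.mem_filter]
    rintro w (rfl | ⟨hw, -⟩)
    exacts [le_max_right _ _, P.min'_le w hw]
  · exact le_antisymm (Finset.max'_le _ _ _ hlt) (Finset.le_max' _ _ (Finset.mem_insert_self _ _))
  · obtain ⟨y, hy, hyα⟩ := Finset.exists_mem_eq_sup' hY a
    obtain ⟨w, hw, hyw, -⟩ := hPY y hy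
    have : (P.filter (· < α)).card < P.card :=
      Finset.card_lt_card (Finset.filter_ssubset.2 ⟨w, hw, not_lt.2 (hyα.trans_le hyw)⟩)
    exact (Finset.card_insert_le _ _).trans this

def IsCanonicalPath (S : Finset ℝ) : Prop :=
  ∃ hS : S.Nonempty, (S : Set ℝ) ⊆ range a ∪ range b ∧ (∃ x, S.min' hS = b x) ∧
    ((∃ y, S.max' hS = a y) ∨ S.max' hS = S.min' hS)

theorem finite_setOf_isCanonicalPath [Finite X] : {S | IsCanonicalPath a b S}.Finite :=
  (((finite_range a).union (finite_range b)).finite_subsets.preimage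
    Finset.coe_injective.injOn).subset fun _ ⟨_, hS, _⟩ => hS

variable {a b}

theorem pathCost_singleton_le {tm : ℝ} (htm : 0 ≤ tm) {S : Finset ℝ} (hS : S.Nonempty)
    (c : ℝ) : pathCost tm {c} ≤ pathCost tm S := by
  have hspan : S.min' hS ≤ S.max' hS := S.min'_le _ (S.max'_mem hS)
  have hcard : (1 : ℝ) ≤ S.card := by exact_mod_cast hS.card_pos
  rw [pathCost_eq _ hS, pathCost_eq _ (Finset.singleton_nonempty _)]
  simp only [Finset.max'_singleton, Finset.min'_singleton, Finset.card_singleton,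
    Nat.cast_one, one_mul, sub_self]
  nlinarith

theorem exists_isCanonicalPath_of_sees [Fintype X] {tm : ℝ} (htm : 0 ≤ tm) {S : Finset ℝ}
    {x₀ : X} (hx₀ : Sees a b S x₀) :
    ∃ T, IsCanonicalPath a b T ∧ (∀ x, Sees a b S x → Sees a b T x) ∧
      pathCost tm T ≤ pathCost tm S := by
  classical
  have hS : S.Nonempty := hx₀.imp fun _ h => h.1
  obtain ⟨P, hPb, hPS, hSP, hPcard⟩ := exists_path_of_right_endpoints a b S
  have hP : P.Nonempty := (hSP x₀ hx₀).imp fun _ h => h.1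
  set Y := Finset.univ.filter (Sees a b S)
  have hY : Y.Nonempty := ⟨x₀, Finset.mem_filter.2 ⟨Finset.mem_univ _, hx₀⟩⟩
  obtain ⟨T, hT, hTP, hTY, hTmin, hTmax, hTcard⟩ :=
    exists_path_ending_at_max_left_endpoint a b P hP Y hY fun x hx =>
      hSP x (Finset.mem_filter.1 hx).2
  obtain ⟨y, hy, hyα⟩ := Finset.exists_mem_eq_sup' hY a
  have hα : Y.sup' hY a ≤ S.max' hS := by
    obtain ⟨v, hv, hyv, -⟩ := (Finset.mem_filter.1 hy).2
    exact hyα ▸ hyv.trans (S.le_max' v hv)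
  have hL : S.min' hS ≤ P.min' hP := by
    obtain ⟨v, hv, hvw⟩ := hPS _ (P.min'_mem hP)
    exact (S.min'_le v hv).trans hvw
  refine ⟨T, ⟨hT, ?_, ?_, ?_⟩,
    fun x hx => hTY x (Finset.mem_filter.2 ⟨Finset.mem_univ _, hx⟩), ?_⟩
  · intro w hw
    rcases Finset.mem_insert.1 (hTP hw) with rfl | hw
    exacts [Or.inl ⟨y, hyα.symm⟩, Or.inr (hPb hw)]
  · obtain ⟨x, hx⟩ := hPb (P.min'_mem hP)
    exact ⟨x, hTmin.trans hx.symm⟩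
  · rw [hTmax, hTmin]
    rcases max_choice (Y.sup' hY a) (P.min' hP) with h | h <;> rw [h]
    exacts [Or.inl ⟨y, hyα⟩, Or.inr rfl]
  · have hcard : (T.card : ℝ) * tm ≤ S.card * tm :=
      mul_le_mul_of_nonneg_right (by exact_mod_cast hTcard.trans hPcard) htm
    have hspan : max (Y.sup' hY a) (P.min' hP) - P.min' hP ≤ S.max' hS - S.min' hS := by
      have := S.min'_le _ (S.max'_mem hS)
      exact sub_le_iff_le_add.2 (max_le (by linarith) (by linarith))
    rw [pathCost_eq _ hT, pathCost_eq _ hS, hTmax, hTmin]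
    linarith

theorem exists_isCanonicalPath [Fintype X] [Nonempty X] {tm : ℝ} (htm : 0 ≤ tm)
    {S : Finset ℝ} (hS : S.Nonempty) :
    ∃ T, IsCanonicalPath a b T ∧ (∀ x, Sees a b S x → Sees a b T x) ∧
      pathCost tm T ≤ pathCost tm S := by
  by_cases hseen : ∃ x, Sees a b S x
  · obtain ⟨x₀, hx₀⟩ := hseen
    exact exists_isCanonicalPath_of_sees htm hx₀
  obtain ⟨x₀⟩ := ‹Nonempty X›
  refine ⟨{b x₀}, ⟨Finset.singleton_nonempty _, ?_, ⟨x₀, rfl⟩, Or.inr rfl⟩,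
    fun x hx => (hseen ⟨x, hx⟩).elim, pathCost_singleton_le htm hS _⟩
  simp

theorem exists_isCanonicalPath_collection [Fintype X] [Nonempty X] {ι : Type*} [Finite ι]
    {tm : ℝ} (htm : 0 ≤ tm) (W : ι → Finset ℝ) (hW : ∀ i, (W i).Nonempty)
    (hWX : ∀ x, ∃ i, Sees a b (W i) x) :
    ∃ V : ι → Finset ℝ, (∀ i, IsCanonicalPath a b (V i)) ∧ (∀ x, ∃ i, Sees a b (V i) x) ∧
      ⨆ i, pathCost tm (V i) ≤ ⨆ i, pathCost tm (W i) := by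
  choose V hV hWV hcost using fun i => exists_isCanonicalPath (a := a) (b := b) htm (hW i)
  refine ⟨V, hV, fun x => ?_, ciSup_mono (finite_range _).bddAbove hcost⟩
  obtain ⟨i, hi⟩ := hWX x
  exact ⟨i, hWV i x hi⟩

end IntervalVisibility

open IntervalVisibility in
/-- Interval model of visibility along a chain-visible curve: each target `x` has a
nonempty closed interval `[a x, b x]`.  A path is a finite nonempty set of reals with
cost `(max - min) + card * tm`; a collection of `m` paths is feasible if every target is
seen from some viewpoint of some path, and its cost is the maximum of the path costs.
There exists an optimal feasible collection whose paths start at right endpoints `b x`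
and end at left endpoints `a y` of target visibility intervals (or are single points). -/
theorem stmt0 {X : Type*} [Fintype X] [Nonempty X] (a b : X → ℝ)
    (hab : ∀ x, a x ≤ b x) (m : ℕ) (hm : 1 ≤ m) (tm : ℝ) (htm : 0 ≤ tm) :
    ∃ (V : Fin m → Finset ℝ) (hV : ∀ i, (V i).Nonempty),
      (∀ x : X, ∃ i, ∃ v ∈ V i, a x ≤ v ∧ v ≤ b x) ∧
      (∀ (W : Fin m → Finset ℝ) (hW : ∀ i, (W i).Nonempty),
        (∀ x : X, ∃ i, ∃ v ∈ W i, a x ≤ v ∧ v ≤ b x) →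
          (⨆ i, ((V i).max' (hV i) - (V i).min' (hV i) + (V i).card * tm)) ≤
            ⨆ i, ((W i).max' (hW i) - (W i).min' (hW i) + (W i).card * tm)) ∧
      (∀ i, (∃ x : X, (V i).min' (hV i) = b x) ∧
        ((∃ y : X, (V i).max' (hV i) = a y) ∨ (V i).max' (hV i) = (V i).min' (hV i))) := by
  have hall : ∀ x, ∃ i : Fin m, Sees a b (Finset.univ.image b) x :=
    fun x => ⟨⟨0, hm⟩, b x, Finset.mem_image_of_mem b (Finset.mem_univ x), hab x, le_rfl⟩
  obtain ⟨V₀, hV₀⟩ := exists_isCanonicalPath_collection htm (fun _ => Finset.univ.image b)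
    (fun _ => Finset.univ_nonempty.image b) hall
  obtain ⟨V, ⟨hVcan, hVX⟩, hVmin⟩ := Set.exists_min_image
    {V : Fin m → Finset ℝ | (∀ i, IsCanonicalPath a b (V i)) ∧ ∀ x, ∃ i, Sees a b (V i) x}
    (fun V => ⨆ i, pathCost tm (V i))
    ((Set.Finite.pi fun _ => finite_setOf_isCanonicalPath a b).subset fun V hV i _ => hV.1 i)
    ⟨V₀, hV₀.1, hV₀.2.1⟩
  choose hV _ hmin hmax using hVcan
  refine ⟨V, hV, hVX, fun W hW hWX => ?_, fun i => ⟨hmin i, hmax i⟩⟩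
  obtain ⟨W', hW'can, hW'X, hW'W⟩ := exists_isCanonicalPath_collection htm W hW hWX
  simp only [← pathCost_eq]
  exact (hVmin W' ⟨hW'can, hW'X⟩).trans hW'W
end

section
/- Suppose m ≥ 1 and t_m ≥ 0. Then there exists a feasible collection of m paths whose cost is at most the cost of every feasible collection of m paths and all of whose viewpoints belong to the finite set {a x : x ∈ X} ∪ {b x : x ∈ X}. (Hence the multi-robot watchman problem restricted to a chain-visible curve reduces to a finite search over candidate viewpoints and is exactly solvable.) -/
/-!
Replace each path by a path of endpoints that sees at least the same targets, with no more
viewpoints and no larger span; an optimum over the finitely many endpoint collections is then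
optimal overall. For a viewpoint `v` of a path with span `[L, R]`, the targets seen by `v` have a
common part `[α, β] ∋ v` with `α` a left and `β` a right endpoint. If `L ≤ α` or `β ≤ R`, that
endpoint lies in `[L, R]` and replaces `v`. Otherwise every target seen by `v` contains `[L, R]`,
so it is seen by any replacement point; if no viewpoint can be replaced, all seen targets contain
`[L, R]` and one endpoint sees them all.
-/

open Finset Set

namespace ChainVisible

variable {X : Type*} (a b : X → ℝ)

noncomputable def endpoints [Fintype X] : Finset ℝ :=
  univ.image a ∪ univ.image b

theorem mem_endpoints [Fintype X] {w : ℝ} :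
    w ∈ endpoints a b ↔ (∃ x, w = a x) ∨ ∃ x, w = b x := by
  simp [endpoints, eq_comm]

/-- `sSup`/`sInf` rather than `max'`/`min'`, so that the cost needs no nonemptiness proof. -/
noncomputable def pathCost (tm : ℝ) (s : Finset ℝ) : ℝ :=
  sSup (s : Set ℝ) - sInf (s : Set ℝ) + s.card * tm

theorem pathCost_eq (tm : ℝ) {s : Finset ℝ} (hs : s.Nonempty) :
    pathCost tm s = s.max' hs - s.min' hs + s.card * tm := by
  rw [pathCost, hs.csSup_eq_max', hs.csInf_eq_min']

theorem pathCost_le_pathCost {tm : ℝ} (htm : 0 ≤ tm) {s t : Finset ℝ} (hs : s.Nonempty)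
    (ht : t.Nonempty) (hcard : s.card ≤ t.card)
    (hspan : s.max' hs - s.min' hs ≤ t.max' ht - t.min' ht) :
    pathCost tm s ≤ pathCost tm t := by
  rw [pathCost_eq tm hs, pathCost_eq tm ht]
  gcongr

theorem max'_sub_min'_le_of_subset_Icc {s : Finset ℝ} (hs : s.Nonempty) {L R : ℝ}
    (h : ∀ w ∈ s, w ∈ Icc L R) : s.max' hs - s.min' hs ≤ R - L := by
  have hmax := (h _ (s.max'_mem hs)).2
  have hmin := (h _ (s.min'_mem hs)).1
  linarith

theorem sup'_mem_Icc {T : Finset X} (hT : T.Nonempty) {v : ℝ}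
    (hv : ∀ x ∈ T, v ∈ Icc (a x) (b x)) {x : X} (hx : x ∈ T) :
    T.sup' hT a ∈ Icc (a x) (b x) :=
  ⟨le_sup' a hx, (sup'_le hT a fun y hy => (hv y hy).1).trans (hv x hx).2⟩

theorem inf'_mem_Icc {T : Finset X} (hT : T.Nonempty) {v : ℝ}
    (hv : ∀ x ∈ T, v ∈ Icc (a x) (b x)) {x : X} (hx : x ∈ T) :
    T.inf' hT b ∈ Icc (a x) (b x) :=
  ⟨(hv x hx).1.trans (le_inf' hT b fun y hy => (hv y hy).2), inf'_le b hx⟩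

theorem exists_endpoint_mem_forall_Icc [Fintype X] [Nonempty X] (T : Finset X) {v : ℝ}
    (hv : ∀ x ∈ T, v ∈ Icc (a x) (b x)) :
    ∃ w ∈ endpoints a b, ∀ x ∈ T, w ∈ Icc (a x) (b x) := by
  classical
  rcases T.eq_empty_or_nonempty with rfl | hT
  · obtain ⟨x₀⟩ := ‹Nonempty X›
    exact ⟨a x₀, (mem_endpoints a b).2 (Or.inl ⟨x₀, rfl⟩), by simp⟩
  · obtain ⟨x₀, -, hx₀⟩ := exists_mem_eq_sup' hT a
    exact ⟨_, (mem_endpoints a b).2 (Or.inl ⟨x₀, hx₀⟩), fun x hx => sup'_mem_Icc a b hT hv hx⟩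

theorem exists_endpoint_mem_Icc_or_Icc_subset [Fintype X] (T : Finset X) {v L R : ℝ}
    (hv : ∀ x ∈ T, v ∈ Icc (a x) (b x)) (hvLR : v ∈ Icc L R) :
    (∃ w ∈ endpoints a b, w ∈ Icc L R ∧ ∀ x ∈ T, w ∈ Icc (a x) (b x)) ∨
      ∀ x ∈ T, Icc L R ⊆ Icc (a x) (b x) := by
  classical
  rcases T.eq_empty_or_nonempty with rfl | hT
  · simp
  have hα : T.sup' hT a ≤ v := sup'_le hT a fun y hy => (hv y hy).1
  have hβ : v ≤ T.inf' hT b := le_inf' hT b fun y hy => (hv y hy).2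
  by_cases hL : L ≤ T.sup' hT a
  · obtain ⟨x₀, -, hx₀⟩ := exists_mem_eq_sup' hT a
    exact Or.inl ⟨_, (mem_endpoints a b).2 (Or.inl ⟨x₀, hx₀⟩), ⟨hL, hα.trans hvLR.2⟩,
      fun x hx => sup'_mem_Icc a b hT hv hx⟩
  by_cases hR : T.inf' hT b ≤ R
  · obtain ⟨x₀, -, hx₀⟩ := exists_mem_eq_inf' hT b
    exact Or.inl ⟨_, (mem_endpoints a b).2 (Or.inr ⟨x₀, hx₀⟩), ⟨hvLR.1.trans hβ, hR⟩,
      fun x hx => inf'_mem_Icc a b hT hv hx⟩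
  rw [not_le] at hL hR
  exact Or.inr fun x hx => Icc_subset_Icc ((le_sup' a hx).trans hL.le) (hR.le.trans (inf'_le b hx))

theorem exists_endpoint_path [Fintype X] [Nonempty X] (s : Finset ℝ) (hs : s.Nonempty) :
    ∃ s' ⊆ endpoints a b, ∃ hs' : s'.Nonempty, s'.card ≤ s.card ∧
      s'.max' hs' - s'.min' hs' ≤ s.max' hs - s.min' hs ∧
      ∀ x, (∃ v ∈ s, v ∈ Icc (a x) (b x)) → ∃ v ∈ s', v ∈ Icc (a x) (b x) := by
  classical
  set L := s.min' hs
  set R := s.max' hs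
  have hsLR : ∀ v ∈ s, v ∈ Icc L R := fun v hv => ⟨s.min'_le v hv, s.le_max' v hv⟩
  have hLR : L ≤ R := (hsLR _ (s.max'_mem hs)).1
  set N := s.filter fun v => ∃ w ∈ endpoints a b, w ∈ Icc L R ∧
    ∀ x, v ∈ Icc (a x) (b x) → w ∈ Icc (a x) (b x)
  have hwide : ∀ v ∈ s, v ∉ N → ∀ x, v ∈ Icc (a x) (b x) → Icc L R ⊆ Icc (a x) (b x) := by
    intro v hv hvN x hvx
    rcases exists_endpoint_mem_Icc_or_Icc_subset a b (univ.filter fun x => v ∈ Icc (a x) (b x))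
      (by simp) (hsLR v hv) with ⟨w, hwE, hwLR, hw⟩ | hsub
    · exact absurd (mem_filter.2 ⟨hv, w, hwE, hwLR, fun x hx => hw x (by simpa using hx)⟩) hvN
    · exact hsub x (by simpa using hvx)
  rcases N.eq_empty_or_nonempty with hN | hN
  · obtain ⟨w, hwE, hw⟩ := exists_endpoint_mem_forall_Icc a b
      (univ.filter fun x => Icc L R ⊆ Icc (a x) (b x)) (v := L)
      fun x hx => (mem_filter.1 hx).2 ⟨le_rfl, hLR⟩
    refine ⟨{w}, by simpa using hwE, singleton_nonempty w, by simpa using hs.card_pos,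
      by simpa using hLR, ?_⟩
    rintro x ⟨v, hv, hvx⟩
    exact ⟨w, mem_singleton_self w, hw x (by simpa using hwide v hv (by simp [hN]) x hvx)⟩
  · choose! snap hsnapE hsnapLR hsnap using fun v (hv : v ∈ N) => (mem_filter.1 hv).2
    refine ⟨N.image snap, fun w hw => ?_, hN.image snap,
      card_image_le.trans (card_filter_le _ _),
      max'_sub_min'_le_of_subset_Icc _ fun w hw => ?_, ?_⟩
    · obtain ⟨v, hv, rfl⟩ := mem_image.1 hw
      exact hsnapE v hv
    · obtain ⟨v, hv, rfl⟩ := mem_image.1 hw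
      exact hsnapLR v hv
    rintro x ⟨v, hv, hvx⟩
    by_cases hvN : v ∈ N
    · exact ⟨snap v, mem_image_of_mem snap hvN, hsnap v hvN x hvx⟩
    · obtain ⟨u, hu⟩ := hN
      exact ⟨snap u, mem_image_of_mem snap hu, hwide v hv hvN x hvx (hsnapLR u hu)⟩

end ChainVisible

open ChainVisible in
/-- Interval model of visibility along a chain-visible curve.  There exists an optimal
feasible collection of `m` paths all of whose viewpoints belong to the finite set of
interval endpoints `{a x : x ∈ X} ∪ {b x : x ∈ X}`. -/
theorem stmt1 {X : Type*} [Fintype X] [Nonempty X] (a b : X → ℝ)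
    (hab : ∀ x, a x ≤ b x) (m : ℕ) (hm : 1 ≤ m) (tm : ℝ) (htm : 0 ≤ tm) :
    ∃ (V : Fin m → Finset ℝ) (hV : ∀ i, (V i).Nonempty),
      (∀ x : X, ∃ i, ∃ v ∈ V i, a x ≤ v ∧ v ≤ b x) ∧
      (∀ (W : Fin m → Finset ℝ) (hW : ∀ i, (W i).Nonempty),
        (∀ x : X, ∃ i, ∃ v ∈ W i, a x ≤ v ∧ v ≤ b x) →
          (⨆ i, ((V i).max' (hV i) - (V i).min' (hV i) + (V i).card * tm)) ≤
            ⨆ i, ((W i).max' (hW i) - (W i).min' (hW i) + (W i).card * tm)) ∧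
      (∀ i, ∀ v ∈ V i, (∃ x : X, v = a x) ∨ (∃ x : X, v = b x)) := by
  classical
  set candidates := (Fintype.piFinset fun _ : Fin m => (endpoints a b).powerset).filter
    fun V => (∀ i, (V i).Nonempty) ∧ ∀ x, ∃ i, ∃ v ∈ V i, v ∈ Icc (a x) (b x)
  have hcand : candidates.Nonempty := by
    refine ⟨fun _ => endpoints a b, mem_filter.2 ⟨by simp, fun _ => ?_, fun x => ?_⟩⟩
    · exact ⟨a (Classical.arbitrary X), (mem_endpoints a b).2 (Or.inl ⟨_, rfl⟩)⟩
    · exact ⟨⟨0, hm⟩, a x, (mem_endpoints a b).2 (Or.inl ⟨x, rfl⟩), le_rfl, hab x⟩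
  obtain ⟨V, hV, hVmin⟩ := exists_min_image candidates (fun V => ⨆ i, pathCost tm (V i)) hcand
  obtain ⟨hVE, hVne, hVcov⟩ := mem_filter.1 hV
  refine ⟨V, hVne, hVcov, fun W hW hWcov => ?_, fun i v hv => ?_⟩
  · choose W' hW'E hW'ne hW'card hW'span hW'cov using fun i => exists_endpoint_path a b (W i) (hW i)
    have hW' : W' ∈ candidates := mem_filter.2 ⟨by simpa using hW'E, hW'ne, fun x => by
      obtain ⟨i, hi⟩ := hWcov x
      exact ⟨i, hW'cov i x hi⟩⟩
    simp only [← pathCost_eq]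
    exact (hVmin W' hW').trans <| ciSup_mono (Set.finite_range _).bddAbove fun i =>
      pathCost_le_pathCost htm (hW'ne i) (hW i) (hW'card i) (hW'span i)
  · exact (mem_endpoints a b).1 (mem_powerset.1 (Fintype.mem_piFinset.1 hVE i) hv)
end

section
/- The recursion terminates after finitely many steps n, every q_k lies strictly between i and j, every target is seen from V = {i, j, q_1, …, q_n}, and for every finite set S ⊆ ℝ with min S = i and max S = j from which every target is seen, |S| ≥ |V|. Consequently, for any t_m ≥ 0, among all paths whose leftmost viewpoint is i and rightmost viewpoint is j and which see every target, V achieves the minimum cost (j − i) + |V|·t_m. -/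
/-!
The greedy point `q k` is the leftmost right endpoint among the targets not yet seen. A target
`x` still unseen after step `l` has `q k ≤ b x` for every `k < l` by minimality, yet is not
seen from `q k`, so `q k < a x`; hence the `q k` increase, lie in `(i, j)`, and each step sees
at least one new target, so the recursion stops. Conversely, a set `S` seeing every target must
see the target realising `q k` at a point of `(q (k-1), q k] ∩ (i, j)`; these points are
distinct, so `S` has at least as many points as `{i, j, q 0, …, q (n-1)}`.
-/

open Finset

theorem card_insert_insert_image_range {α : Type*} [LinearOrder α] {i j : α} {n : ℕ}
    {f : ℕ → α} (hf : StrictMonoOn f (Set.Iio n)) (hbetween : ∀ k < n, i < f k ∧ f k < j) :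
    (insert i (insert j ((range n).image f))).card = ({i, j} : Finset α).card + n := by
  have hdisj : Disjoint ({i, j} : Finset α) ((range n).image f) := by
    simp only [disjoint_left, mem_insert, mem_singleton, mem_image, mem_range, not_exists,
      not_and]
    rintro v (rfl | rfl) k hk rfl
    exacts [(hbetween k hk).1.ne' rfl, (hbetween k hk).2.ne rfl]
  have hinj : Set.InjOn f (range n) := by
    rw [coe_range]
    exact hf.injOn
  rw [show insert i (insert j _) = {i, j} ∪ _ by rw [insert_union, singleton_union],
    card_union_of_disjoint hdisj, card_image_of_injOn hinj, card_range]

namespace GreedyPath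

variable {X : Type*} (a b : X → ℝ)

def Sees (V : Finset ℝ) (x : X) : Prop := ∃ v ∈ V, a x ≤ v ∧ v ≤ b x

variable [Fintype X]

open Classical in
noncomputable def unseen (V : Finset ℝ) : Finset X := {x | ¬ Sees a b V x}

-- `0` is a junk value, never used: the recursion stops once every target is seen.
noncomputable def nextView (V : Finset ℝ) : ℝ :=
  if h : (unseen a b V).Nonempty then ((unseen a b V).image b).min' (h.image b) else 0

noncomputable def views (i j : ℝ) : ℕ → Finset ℝ
  | 0 => {i, j}
  | k + 1 => insert (nextView a b (views i j k)) (views i j k)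

noncomputable def greedy (i j : ℝ) (k : ℕ) : ℝ := nextView a b (views a b i j k)

variable {a b}

@[simp]
theorem mem_unseen {V : Finset ℝ} {x : X} : x ∈ unseen a b V ↔ ¬ Sees a b V x := by
  simp [unseen]

theorem unseen_anti {V W : Finset ℝ} (h : V ⊆ W) : unseen a b W ⊆ unseen a b V := by
  intro x
  simp only [mem_unseen, Sees]
  exact fun hW ⟨v, hv, hx⟩ => hW ⟨v, h hv, hx⟩

theorem isLeast_nextView {V : Finset ℝ} (h : (unseen a b V).Nonempty) :
    IsLeast (b '' unseen a b V) (nextView a b V) := by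
  rw [nextView, dif_pos h, ← coe_image]
  exact isLeast_min' _ _

theorem unseen_insert_nextView_ssubset (hab : ∀ x, a x ≤ b x) {V : Finset ℝ}
    (h : (unseen a b V).Nonempty) : unseen a b (insert (nextView a b V) V) ⊂ unseen a b V := by
  obtain ⟨⟨x, hx, hbx⟩, -⟩ := isLeast_nextView h
  refine ssubset_of_subset_of_ne (unseen_anti (subset_insert _ _)) fun heq => ?_
  rw [← heq, mem_coe, mem_unseen] at hx
  exact hx ⟨_, mem_insert_self _ _, hbx ▸ hab x, hbx.ge⟩

variable (a b) in
theorem views_mono (i j : ℝ) : Monotone (views a b i j) :=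
  monotone_nat_of_le_succ fun _ => subset_insert _ _

theorem views_eq (i j : ℝ) (k : ℕ) :
    views a b i j k = insert i (insert j ((range k).image (greedy a b i j))) := by
  induction k with
  | zero => rfl
  | succ k ih =>
    rw [views, range_add_one, image_insert, insert_comm j, insert_comm i, ← ih, greedy]

theorem exists_unseen_views_eq_empty (hab : ∀ x, a x ≤ b x) (i j : ℝ) :
    ∃ n, unseen a b (views a b i j n) = ∅ ∧
      ∀ k < n, (unseen a b (views a b i j k)).Nonempty := by
  classical
  have hex : ∃ n, unseen a b (views a b i j n) = ∅ := by
    obtain ⟨n, hn⟩ := WellFounded.not_rel_apply_succ (r := (· < ·))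
      fun k => unseen a b (views a b i j k)
    refine ⟨n, not_nonempty_iff_eq_empty.1 fun hne => hn ?_⟩
    exact unseen_insert_nextView_ssubset hab hne
  exact ⟨Nat.find hex, Nat.find_spec hex, fun k hk =>
    nonempty_iff_ne_empty.2 (Nat.find_min hex hk)⟩

variable {i j : ℝ} {n : ℕ}

theorem isLeast_greedy {k : ℕ} (h : (unseen a b (views a b i j k)).Nonempty) :
    IsLeast (b '' unseen a b (views a b i j k)) (greedy a b i j k) :=
  isLeast_nextView h

theorem greedy_lt_of_mem_unseen {k l : ℕ} (hkl : k < l) {x : X}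
    (hx : x ∈ unseen a b (views a b i j l)) : greedy a b i j k < a x := by
  have hxk : x ∈ unseen a b (views a b i j k) := unseen_anti (views_mono a b i j hkl.le) hx
  have hle : greedy a b i j k ≤ b x := (isLeast_greedy ⟨x, hxk⟩).2 ⟨x, hxk, rfl⟩
  have hmem : greedy a b i j k ∈ views a b i j l := views_mono a b i j hkl (mem_insert_self _ _)
  by_contra! hax
  exact mem_unseen.1 hx ⟨_, hmem, hax, hle⟩

theorem lt_and_lt_of_mem_unseen_views
    (hmeet : ∀ x : X, (Set.Icc (a x) (b x) ∩ Set.Icc i j).Nonempty) {k : ℕ} {x : X}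
    (hx : x ∈ unseen a b (views a b i j k)) : i < a x ∧ b x < j := by
  replace hx : x ∈ unseen a b {i, j} := unseen_anti (views_mono a b i j k.zero_le) hx
  obtain ⟨v, ⟨hav, hvb⟩, hiv, hvj⟩ := hmeet x
  simp only [mem_unseen, Sees, mem_insert, mem_singleton, exists_eq_or_imp, exists_eq_left,
    not_or, not_and_or, not_le] at hx
  constructor
  · exact hx.1.resolve_right (by linarith)
  · exact hx.2.resolve_left (by linarith)

theorem greedy_strictMonoOn (hab : ∀ x, a x ≤ b x)
    (hn : ∀ k < n, (unseen a b (views a b i j k)).Nonempty) :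
    StrictMonoOn (greedy a b i j) (Set.Iio n) := by
  intro k _ l hl hkl
  obtain ⟨x, hx, hbx⟩ := (isLeast_greedy (hn l hl)).1
  calc greedy a b i j k < a x := greedy_lt_of_mem_unseen hkl hx
    _ ≤ b x := hab x
    _ = greedy a b i j l := hbx

theorem greedy_between (hab : ∀ x, a x ≤ b x)
    (hmeet : ∀ x : X, (Set.Icc (a x) (b x) ∩ Set.Icc i j).Nonempty)
    (hn : ∀ k < n, (unseen a b (views a b i j k)).Nonempty) :
    ∀ k < n, i < greedy a b i j k ∧ greedy a b i j k < j := by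
  intro k hk
  obtain ⟨x, hx, hbx⟩ := (isLeast_greedy (hn k hk)).1
  have hx₀ := lt_and_lt_of_mem_unseen_views hmeet hx
  rw [← hbx]
  exact ⟨hx₀.1.trans_le (hab x), hx₀.2⟩

theorem exists_mem_between_greedy
    (hmeet : ∀ x : X, (Set.Icc (a x) (b x) ∩ Set.Icc i j).Nonempty) {k : ℕ}
    (h : (unseen a b (views a b i j k)).Nonempty) {S : Finset ℝ} (hS : ∀ x, Sees a b S x) :
    ∃ t ∈ S, (∀ l < k, greedy a b i j l < t) ∧ t ≤ greedy a b i j k ∧ i < t ∧ t < j := by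
  obtain ⟨x, hx, hbx⟩ := (isLeast_greedy h).1
  obtain ⟨t, htS, hat, htb⟩ := hS x
  have hx₀ := lt_and_lt_of_mem_unseen_views hmeet hx
  exact ⟨t, htS, fun l hl => (greedy_lt_of_mem_unseen hl hx).trans_le hat, hbx ▸ htb,
    hx₀.1.trans_le hat, htb.trans_lt hx₀.2⟩

theorem card_views_le_card (hab : ∀ x, a x ≤ b x)
    (hmeet : ∀ x : X, (Set.Icc (a x) (b x) ∩ Set.Icc i j).Nonempty)
    (hn : ∀ k < n, (unseen a b (views a b i j k)).Nonempty) {S : Finset ℝ} (hi : i ∈ S)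
    (hj : j ∈ S) (hS : ∀ x, Sees a b S x) : (views a b i j n).card ≤ S.card := by
  choose! t htS hgt hle hbetween using
    fun k hk => exists_mem_between_greedy hmeet (hn k hk) hS
  have hmono : StrictMonoOn t (Set.Iio n) := fun k hk l hl hkl =>
    (hle k hk).trans_lt (hgt l hl k hkl)
  calc (views a b i j n).card = ({i, j} : Finset ℝ).card + n := by
        rw [views_eq]
        exact card_insert_insert_image_range (greedy_strictMonoOn hab hn)
          (greedy_between hab hmeet hn)
    _ = (insert i (insert j ((range n).image t))).card :=
        (card_insert_insert_image_range hmono hbetween).symm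
    _ ≤ S.card := card_le_card <| by
        simp only [insert_subset_iff, image_subset_iff, mem_range]
        exact ⟨hi, hj, htS⟩

end GreedyPath

open GreedyPath

theorem stmt2_general {X : Type*} [Fintype X] (a b : X → ℝ)
    (hab : ∀ x, a x ≤ b x) (i j : ℝ)
    (hmeet : ∀ x : X, (Set.Icc (a x) (b x) ∩ Set.Icc i j).Nonempty) :
    ∃ (n : ℕ) (q : ℕ → ℝ),
      (∀ k l, k < l → l < n → q k < q l) ∧
      (∀ k < n, IsLeast
        (b '' {x : X |
          ¬ ∃ v ∈ insert i (insert j ((Finset.range k).image q)), a x ≤ v ∧ v ≤ b x})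
        (q k)) ∧
      (∀ k < n, i < q k ∧ q k < j) ∧
      (∀ x : X, ∃ v ∈ insert i (insert j ((Finset.range n).image q)),
        a x ≤ v ∧ v ≤ b x) ∧
      (∀ (S : Finset ℝ) (hS : S.Nonempty), S.min' hS = i → S.max' hS = j →
        (∀ x : X, ∃ v ∈ S, a x ≤ v ∧ v ≤ b x) →
        (insert i (insert j ((Finset.range n).image q))).card ≤ S.card) ∧
      (∀ tm : ℝ, 0 ≤ tm →
        ∀ (S : Finset ℝ) (hS : S.Nonempty), S.min' hS = i → S.max' hS = j →
        (∀ x : X, ∃ v ∈ S, a x ≤ v ∧ v ≤ b x) →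
        (j - i) + (insert i (insert j ((Finset.range n).image q))).card * tm ≤
          (S.max' hS - S.min' hS) + S.card * tm) := by
  obtain ⟨n, hdone, hn⟩ := exists_unseen_views_eq_empty hab i j
  have hcard : ∀ (S : Finset ℝ) (hS : S.Nonempty), S.min' hS = i → S.max' hS = j →
      (∀ x, Sees a b S x) → (views a b i j n).card ≤ S.card :=
    fun S hS hmin hmax => card_views_le_card hab hmeet hn (hmin ▸ S.min'_mem hS)
      (hmax ▸ S.max'_mem hS)
  refine ⟨n, greedy a b i j, ?_⟩
  simp only [← views_eq]
  refine ⟨fun k l hkl hl => greedy_strictMonoOn hab hn (hkl.trans hl) hl hkl,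
    fun k hk => ?_, greedy_between hab hmeet hn, fun x => ?_, hcard, ?_⟩
  · convert isLeast_greedy (hn k hk)
    ext x
    simp [Sees]
  · by_contra hx
    simpa [hdone] using mem_unseen.2 hx
  · intro tm htm S hS hmin hmax hS'
    rw [hmin, hmax]
    gcongr (j - i) + ?_ * tm
    exact_mod_cast hcard S hS hmin hmax hS'

/-- Greedy single-path procedure (Algorithm 1) in the interval model.  Given `i ≤ j`
such that every visibility interval `[a x, b x]` meets `[i, j]`, there is a finite
strictly increasing greedy sequence `q 0 < q 1 < ⋯ < q (n-1)`, where `q k` is the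
minimum of `b x` over targets not yet seen from `{i, j, q 0, …, q (k-1)}`, such that:
every `q k` lies strictly between `i` and `j`; every target is seen from
`V = {i, j, q 0, …, q (n-1)}`; `V` has minimum cardinality among finite sets with
minimum `i` and maximum `j` seeing every target; and consequently, for every `tm ≥ 0`,
`V` minimizes the cost `(j - i) + |V| * tm` among all such paths. -/
theorem stmt2 {X : Type*} [Fintype X] [Nonempty X] (a b : X → ℝ)
    (hab : ∀ x, a x ≤ b x) (i j : ℝ) (hij : i ≤ j)
    (hmeet : ∀ x : X, (Set.Icc (a x) (b x) ∩ Set.Icc i j).Nonempty) :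
    ∃ (n : ℕ) (q : ℕ → ℝ),
      (∀ k l, k < l → l < n → q k < q l) ∧
      (∀ k < n, IsLeast
        (b '' {x : X |
          ¬ ∃ v ∈ insert i (insert j ((Finset.range k).image q)), a x ≤ v ∧ v ≤ b x})
        (q k)) ∧
      (∀ k < n, i < q k ∧ q k < j) ∧
      (∀ x : X, ∃ v ∈ insert i (insert j ((Finset.range n).image q)),
        a x ≤ v ∧ v ≤ b x) ∧
      (∀ (S : Finset ℝ) (hS : S.Nonempty), S.min' hS = i → S.max' hS = j →
        (∀ x : X, ∃ v ∈ S, a x ≤ v ∧ v ≤ b x) →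
        (insert i (insert j ((Finset.range n).image q))).card ≤ S.card) ∧
      (∀ tm : ℝ, 0 ≤ tm →
        ∀ (S : Finset ℝ) (hS : S.Nonempty), S.min' hS = i → S.max' hS = j →
        (∀ x : X, ∃ v ∈ S, a x ≤ v ∧ v ≤ b x) →
        (j - i) + (insert i (insert j ((Finset.range n).image q))).card * tm ≤
          (S.max' hS - S.min' hS) + S.card * tm) :=
  stmt2_general a b hab i j hmeet
end

section
/- For every set S ⊆ ℝ that sees every target and every k with 1 ≤ k ≤ K, the set S ∩ (−∞, g_k] contains at least k elements. (The greedy viewpoints are rightmost possible: any seeing set must place its k-th smallest point at or before g_k.) -/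
/-!
If `x` is the target realising the minimum `g m = b x`, then `x` is unseen from every
earlier `g l`; since `x` was a candidate at step `l`, minimality gives `g l ≤ b x`, so `x` being
unseen forces `g l < a x`. A point of `S` seeing this target therefore lies strictly to the right
of `g 0, …, g (m-1)` and at or left of `g m`. These points, one per step `0, …, k`, are strictly
increasing and all lie in `S ∩ (−∞, g k]`.
-/

lemma Set.natCast_le_encard_of_injective {α : Type*} {n : ℕ} {f : Fin n → α} {T : Set α}
    (hf : Function.Injective f) (hT : Set.range f ⊆ T) : (n : ℕ∞) ≤ T.encard :=
  calc (n : ℕ∞) = (Set.range f).encard := by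
        rw [← Set.image_univ, hf.injOn.encard_image, Set.encard_univ, ENat.card_eq_coe_fintype_card,
          Fintype.card_fin]
    _ ≤ T.encard := Set.encard_le_encard hT

namespace GreedyViewpoints

variable {X : Type*} (a b : X → ℝ) (g : ℕ → ℝ)

def SeenBefore (k : ℕ) (x : X) : Prop :=
  ∃ l < k, a x ≤ g l ∧ g l ≤ b x

variable {a b g} {K : ℕ}

lemma lt_left_of_not_seenBefore
    (hgreedy : ∀ k < K, IsLeast (b '' {x | ¬ SeenBefore a b g k x}) (g k))
    {l m : ℕ} {x : X} (hm : m < K) (hlm : l < m) (hx : ¬ SeenBefore a b g m x) : g l < a x := by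
  have hbx : g l ≤ b x :=
    (hgreedy l (hlm.trans hm)).2 ⟨x, fun ⟨j, hj, hseen⟩ => hx ⟨j, hj.trans hlm, hseen⟩, rfl⟩
  by_contra! hax
  exact hx ⟨l, hlm, hax, hbx⟩

lemma exists_mem_between_greedy
    (hgreedy : ∀ k < K, IsLeast (b '' {x | ¬ SeenBefore a b g k x}) (g k))
    {S : Set ℝ} (hS : ∀ x, ∃ v ∈ S, a x ≤ v ∧ v ≤ b x) {l : ℕ} (hl : l < K) :
    ∃ v ∈ S, (∀ m < l, g m < v) ∧ v ≤ g l := by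
  obtain ⟨x, hx, hbx⟩ := (hgreedy l hl).1
  obtain ⟨v, hvS, hav, hvb⟩ := hS x
  exact ⟨v, hvS, fun m hm => (lt_left_of_not_seenBefore hgreedy hl hm hx).trans_le hav, hbx ▸ hvb⟩

end GreedyViewpoints

theorem stmt7_general {X : Type*} (a b : X → ℝ) (K : ℕ) (g : ℕ → ℝ)
    (hgreedy : ∀ k < K,
      IsLeast (b '' {x : X | ¬ ∃ l < k, a x ≤ g l ∧ g l ≤ b x}) (g k))
    (S : Set ℝ) (hS : ∀ x : X, ∃ v ∈ S, a x ≤ v ∧ v ≤ b x) :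
    ∀ k < K, (k + 1 : ℕ∞) ≤ (S ∩ Set.Iic (g k)).encard := by
  intro k hk
  choose! v hvS hv_gt hv_le using fun l (hl : l < K) =>
    GreedyViewpoints.exists_mem_between_greedy hgreedy hS hl
  have hlt (i : Fin (k + 1)) : (i : ℕ) < K := i.is_lt.trans_le hk
  let f : Fin (k + 1) → ℝ := fun i => v i
  have hf : StrictMono f := fun i j hij => (hv_le i (hlt i)).trans_lt (hv_gt j (hlt j) i hij)
  have hrange : Set.range f ⊆ S ∩ Set.Iic (g k) := by
    rintro _ ⟨i, rfl⟩
    exact ⟨hvS i (hlt i), (hf.monotone (Fin.le_last i)).trans (hv_le k hk)⟩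
  exact_mod_cast Set.natCast_le_encard_of_injective hf.injective hrange

/-- Greedy viewpoint sequence in the interval model: `g k` (0-indexed) is the minimum of
`b x` over targets not seen from `{g 0, …, g (k-1)}`, stopping at the first `K` such
that every target is seen from `{g 0, …, g (K-1)}`.  Then for every set `S ⊆ ℝ` seeing
every target and every `k < K`, the set `S ∩ (−∞, g k]` contains at least `k + 1`
elements: the greedy viewpoints are rightmost possible. -/
theorem stmt7 {X : Type*} [Fintype X] [Nonempty X] (a b : X → ℝ)
    (hab : ∀ x, a x ≤ b x) (K : ℕ) (g : ℕ → ℝ)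
    (hgreedy : ∀ k < K,
      IsLeast (b '' {x : X | ¬ ∃ l < k, a x ≤ g l ∧ g l ≤ b x}) (g k))
    (hdone : ∀ x : X, ∃ l < K, a x ≤ g l ∧ g l ≤ b x)
    (S : Set ℝ) (hS : ∀ x : X, ∃ v ∈ S, a x ≤ v ∧ v ≤ b x) :
    ∀ k < K, (k + 1 : ℕ∞) ≤ (S ∩ Set.Iic (g k)).encard :=
  stmt7_general a b K g hgreedy S hS
end

section
/- The greedy set {g_1, …, g_K} sees every target, and it has minimum cardinality among all sets seeing every target: every set S ⊆ ℝ that sees every target satisfies |S| ≥ K. -/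
/-!
The greedy points witness minimality. For each `k < K` pick a target `x k` attaining the
minimum `b (x k) = g k`. For `j < k` the target `x k` is still unseen at step `j`, so
`g j ≤ b (x k)` by minimality, and since `g j` does not see it, `g j < a (x k)`. Thus the
intervals `[a (x k), b (x k)]` are pairwise disjoint and lie in increasing order, so any set
seeing all of them contains `K` distinct points, one in each.
-/

open Set

lemma Nat.encard_Iio (K : ℕ) : (Iio K).encard = K := by
  rw [← Finset.coe_range, encard_coe_eq_coe_finsetCard, Finset.card_range]

lemma natCast_le_encard_of_strictMonoOn_Iio {α : Type*} [Preorder α] {K : ℕ} {f : ℕ → α}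
    {S : Set α} (hf : StrictMonoOn f (Iio K)) (hS : MapsTo f (Iio K) S) :
    (K : ℕ∞) ≤ S.encard :=
  Nat.encard_Iio K ▸ encard_le_encard_of_injOn hS hf.injOn

lemma greedy_lt_left_of_unseen {X : Type*} {a b : X → ℝ} {g : ℕ → ℝ} {j k : ℕ} {x : X}
    (hmin : IsLeast (b '' {x : X | ¬ ∃ l < j, a x ≤ g l ∧ g l ≤ b x}) (g j)) (hjk : j < k)
    (hx : ¬ ∃ l < k, a x ≤ g l ∧ g l ≤ b x) :
    g j < a x := by
  have hle : g j ≤ b x :=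
    hmin.2 ⟨x, fun ⟨l, hl, hseen⟩ => hx ⟨l, hl.trans hjk, hseen⟩, rfl⟩
  by_contra! hge
  exact hx ⟨j, hjk, hge, hle⟩

theorem stmt8_general {X : Type*} [Nonempty X] (a b : X → ℝ)
    (K : ℕ) (g : ℕ → ℝ)
    (hgreedy : ∀ k < K,
      IsLeast (b '' {x : X | ¬ ∃ l < k, a x ≤ g l ∧ g l ≤ b x}) (g k))
    (hdone : ∀ x : X, ∃ l < K, a x ≤ g l ∧ g l ≤ b x) :
    (∀ x : X, ∃ v ∈ g '' {l | l < K}, a x ≤ v ∧ v ≤ b x) ∧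
      (∀ S : Set ℝ, (∀ x : X, ∃ v ∈ S, a x ≤ v ∧ v ≤ b x) → (K : ℕ∞) ≤ S.encard) := by
  refine ⟨fun x => ?_, fun S hS => ?_⟩
  · obtain ⟨l, hl, hseen⟩ := hdone x
    exact ⟨g l, ⟨l, hl, rfl⟩, hseen⟩
  choose! x hx_unseen hx_min using fun k (hk : k < K) => (hgreedy k hk).1
  choose s hsS hs_left hs_right using fun k => hS (x k)
  have hs_mono : StrictMonoOn s (Iio K) := fun j hj k hk hjk =>
    calc s j ≤ b (x j) := hs_right j
      _ = g j := hx_min j hj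
      _ < a (x k) := greedy_lt_left_of_unseen (hgreedy j hj) hjk (hx_unseen k hk)
      _ ≤ s k := hs_left k
  exact natCast_le_encard_of_strictMonoOn_Iio hs_mono fun k _ => hsS k

/-- Greedy viewpoint sequence in the interval model: `g k` (0-indexed) is the minimum of
`b x` over targets not seen from `{g 0, …, g (k-1)}`, stopping at the first `K` such
that every target is seen from `{g 0, …, g (K-1)}`.  Then the greedy set
`{g 0, …, g (K-1)}` sees every target, and any set `S ⊆ ℝ` seeing every target has at
least `K` elements. -/
theorem stmt8 {X : Type*} [Fintype X] [Nonempty X] (a b : X → ℝ)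
    (hab : ∀ x, a x ≤ b x) (K : ℕ) (g : ℕ → ℝ)
    (hgreedy : ∀ k < K,
      IsLeast (b '' {x : X | ¬ ∃ l < k, a x ≤ g l ∧ g l ≤ b x}) (g k))
    (hdone : ∀ x : X, ∃ l < K, a x ≤ g l ∧ g l ≤ b x) :
    (∀ x : X, ∃ v ∈ g '' {l | l < K}, a x ≤ v ∧ v ≤ b x) ∧
      (∀ S : Set ℝ, (∀ x : X, ∃ v ∈ S, a x ≤ v ∧ v ≤ b x) → (K : ℕ∞) ≤ S.encard) :=
  stmt8_general a b K g hgreedy hdone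
end

section
/- Every target x ∈ X with a x ≤ r_m is seen from some viewpoint in V_1 ∪ … ∪ V_m produced by the street construction. (Every point visible from the curve up to the last endpoint r_m of the constructed paths is seen by the constructed discrete viewpoints.) -/
/-!
A target `x` with `a x ≤ r i` is handled by the first phase `i` with `a x ≤ r i`. At that phase
`l i ≤ b x`: for `i = 0` because `l 0` is the least right endpoint, and otherwise because
`r (i-1) < a x` makes `b x` a candidate for the minimum defining `l i`. If `[a x, b x]` contains
neither `l i` nor `r i`, then the point of `G*` seeing `x` lies in the open interval `(l i, r i)`,
and it survives the truncation of `W i`, which keeps an initial segment ending at `r i`.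
-/

/-- The street construction (Algorithm 2) in the interval model of visibility along a
chain-visible curve `[0, L]`.  Targets `x ∈ X` have visibility intervals
`[a x, b x] ⊆ [0, L]`.  `Gstar` is a set of minimum cardinality seeing every target.
Starting from `l 0 = min_x b x`, for each `i < m` the algorithm sets
`r i := min (l i + T) L`, collects `W i := Gstar ∩ (l i, r i)`, truncates `W i` to its
`⌈T / tm⌉` smallest elements (redefining `r i` as `max (W i)`) whenever
`|W i| > T / tm`, sets `V i := {l i} ∪ W i ∪ {r i}`, and moves to
`l (i+1) := min {b x : a x > r i}` (or `r i` when no target starts after `r i`). -/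
structure StreetData (X : Type*) [Fintype X] [Nonempty X] where
  a : X → ℝ
  b : X → ℝ
  hab : ∀ x, a x ≤ b x
  L : ℝ
  hL : 0 < L
  ha0 : ∀ x, 0 ≤ a x
  hbL : ∀ x, b x ≤ L
  tm : ℝ
  htm : 0 < tm
  T : ℝ
  hT : 0 < T
  m : ℕ
  hm : 1 ≤ m
  Gstar : Finset ℝ
  hGsub : ↑Gstar ⊆ Set.Icc 0 L
  hGsees : ∀ x, ∃ v ∈ Gstar, a x ≤ v ∧ v ≤ b x
  hGmin : ∀ S : Finset ℝ, ↑S ⊆ Set.Icc 0 L →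
    (∀ x, ∃ v ∈ S, a x ≤ v ∧ v ≤ b x) → Gstar.card ≤ S.card
  l : ℕ → ℝ
  r : ℕ → ℝ
  W : ℕ → Finset ℝ
  V : ℕ → Finset ℝ
  hl0 : IsLeast (Set.range b) (l 0)
  hstep_trunc : ∀ i < m,
    (((Gstar.filter (fun g => l i < g ∧ g < min (l i + T) L)).card : ℝ) > T / tm →
      W i ⊆ Gstar.filter (fun g => l i < g ∧ g < min (l i + T) L) ∧
      (W i).card = ⌈T / tm⌉₊ ∧
      (∀ w ∈ W i, ∀ g ∈ Gstar.filter (fun g => l i < g ∧ g < min (l i + T) L),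
        g ≤ w → g ∈ W i) ∧
      IsGreatest (↑(W i) : Set ℝ) (r i))
  hstep_no_trunc : ∀ i < m,
    (¬ ((Gstar.filter (fun g => l i < g ∧ g < min (l i + T) L)).card : ℝ) > T / tm →
      W i = Gstar.filter (fun g => l i < g ∧ g < min (l i + T) L) ∧
      r i = min (l i + T) L)
  hV : ∀ i < m, V i = insert (l i) (insert (r i) (W i))
  hlsucc_ex : ∀ i < m, (∃ x, r i < a x) →
    IsLeast {t : ℝ | ∃ x, r i < a x ∧ t = b x} (l (i + 1))
  hlsucc_nex : ∀ i < m, (¬ ∃ x, r i < a x) → l (i + 1) = r i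

namespace StreetData

variable {X : Type*} [Fintype X] [Nonempty X] (D : StreetData X)

theorem mem_W_of_mem_Gstar {i : ℕ} (hi : i < D.m) {g : ℝ} (hg : g ∈ D.Gstar)
    (hlg : D.l i < g) (hgr : g < D.r i) : g ∈ D.W i := by
  by_cases htrunc : ((D.Gstar.filter
      (fun g => D.l i < g ∧ g < min (D.l i + D.T) D.L)).card : ℝ) > D.T / D.tm
  · obtain ⟨hWsub, -, hdown, hrW, -⟩ := D.hstep_trunc i hi htrunc
    have hr_lt := (Finset.mem_filter.1 (hWsub hrW)).2.2
    exact hdown _ hrW g (Finset.mem_filter.2 ⟨hg, hlg, hgr.trans hr_lt⟩) hgr.le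
  · obtain ⟨hWeq, hreq⟩ := D.hstep_no_trunc i hi htrunc
    exact hWeq ▸ Finset.mem_filter.2 ⟨hg, hlg, hreq ▸ hgr⟩

theorem exists_mem_V_sees {i : ℕ} (hi : i < D.m) {x : X} (hlb : D.l i ≤ D.b x)
    (har : D.a x ≤ D.r i) : ∃ v ∈ D.V i, D.a x ≤ v ∧ v ≤ D.b x := by
  rw [D.hV i hi]
  by_cases hal : D.a x ≤ D.l i
  · exact ⟨D.l i, by simp, hal, hlb⟩
  by_cases hrb : D.r i ≤ D.b x
  · exact ⟨D.r i, by simp, har, hrb⟩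
  obtain ⟨g, hg, hag, hgb⟩ := D.hGsees x
  have hgW := D.mem_W_of_mem_Gstar hi hg ((not_le.1 hal).trans_le hag)
    (hgb.trans_lt (not_le.1 hrb))
  exact ⟨g, by simp [hgW], hag, hgb⟩

theorem l_succ_le_b {i : ℕ} (hi : i < D.m) {x : X} (hra : D.r i < D.a x) :
    D.l (i + 1) ≤ D.b x :=
  (D.hlsucc_ex i hi ⟨x, hra⟩).2 ⟨x, hra, rfl⟩

theorem exists_mem_V_sees_of_a_le_r {i : ℕ} (hi : i < D.m) {x : X} (har : D.a x ≤ D.r i) :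
    ∃ j < D.m, ∃ v ∈ D.V j, D.a x ≤ v ∧ v ≤ D.b x := by
  induction i with
  | zero => exact ⟨0, hi, D.exists_mem_V_sees hi (D.hl0.2 ⟨x, rfl⟩) har⟩
  | succ n ih =>
    by_cases hprev : D.a x ≤ D.r n
    · exact ih (Nat.lt_of_succ_lt hi) hprev
    · exact ⟨n + 1, hi,
        D.exists_mem_V_sees hi (D.l_succ_le_b (Nat.lt_of_succ_lt hi) (not_le.1 hprev)) har⟩

end StreetData

/-- Every target `x` with `a x ≤ r m` (the last right endpoint produced by the street
construction, 0-indexed as `r (m-1)`) is seen from some viewpoint in `V 1 ∪ … ∪ V m`. -/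
theorem stmt9 {X : Type*} [Fintype X] [Nonempty X] (D : StreetData X) :
    ∀ x : X, D.a x ≤ D.r (D.m - 1) →
      ∃ i < D.m, ∃ v ∈ D.V i, D.a x ≤ v ∧ v ≤ D.b x :=
  fun _ hx => D.exists_mem_V_sees_of_a_le_r (Nat.sub_lt D.hm one_pos) hx
end

section
/- If 3·t_m ≤ 2·T̂, then every path V_i produced by the street construction has cost at most 4·T̂, i.e. (max V_i − min V_i) + |V_i|·t_m ≤ 4·T̂. -/
theorem Finset.max'_sub_min'_le_of_subset_Icc {α : Type*} [AddCommGroup α] [LinearOrder α]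
    [IsOrderedAddMonoid α] {s : Finset α} (hs : s.Nonempty) {lo hi : α}
    (hsub : ↑s ⊆ Set.Icc lo hi) : s.max' hs - s.min' hs ≤ hi - lo :=
  sub_le_sub (s.max'_le hs _ fun _ hx => (hsub hx).2) (s.le_min' hs _ fun _ hx => (hsub hx).1)

namespace StreetData

variable {X : Type*} [Fintype X] [Nonempty X] (D : StreetData X)

noncomputable def window (i : ℕ) : Finset ℝ :=
  D.Gstar.filter (fun g => D.l i < g ∧ g < min (D.l i + D.T) D.L)

variable {D} {i : ℕ}

theorem mem_window {g : ℝ} :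
    g ∈ D.window i ↔ g ∈ D.Gstar ∧ D.l i < g ∧ g < min (D.l i + D.T) D.L :=
  Finset.mem_filter

theorem W_subset_window (hi : i < D.m) : D.W i ⊆ D.window i := by
  by_cases hc : ((D.window i).card : ℝ) > D.T / D.tm
  · exact (D.hstep_trunc i hi hc).1
  · exact (D.hstep_no_trunc i hi hc).1.subset

theorem r_le_min (hi : i < D.m) : D.r i ≤ min (D.l i + D.T) D.L := by
  by_cases hc : ((D.window i).card : ℝ) > D.T / D.tm
  · obtain ⟨hWsub, -, -, hr, -⟩ := D.hstep_trunc i hi hc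
    exact (mem_window.1 (hWsub hr)).2.2.le
  · exact (D.hstep_no_trunc i hi hc).2.le

theorem l_le_L : ∀ i < D.m, D.l i ≤ D.L
  | 0, _ => by
    obtain ⟨x, hx⟩ := D.hl0.1
    exact hx ▸ D.hbL x
  | j + 1, hj => by
    by_cases hex : ∃ x, D.r j < D.a x
    · obtain ⟨x, -, hbx⟩ := (D.hlsucc_ex j (by omega) hex).1
      exact hbx ▸ D.hbL x
    · rw [D.hlsucc_nex j (by omega) hex]
      exact (r_le_min (by omega)).trans (min_le_right _ _)

theorem l_le_r (hi : i < D.m) : D.l i ≤ D.r i := by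
  by_cases hc : ((D.window i).card : ℝ) > D.T / D.tm
  · obtain ⟨hWsub, -, -, hr, -⟩ := D.hstep_trunc i hi hc
    exact (mem_window.1 (hWsub hr)).2.1.le
  · rw [(D.hstep_no_trunc i hi hc).2]
    exact le_min (by linarith [D.hT]) (l_le_L i hi)

theorem W_le_r (hi : i < D.m) {w : ℝ} (hw : w ∈ D.W i) : w ≤ D.r i := by
  by_cases hc : ((D.window i).card : ℝ) > D.T / D.tm
  · exact (D.hstep_trunc i hi hc).2.2.2.2 hw
  · rw [(D.hstep_no_trunc i hi hc).2]
    exact (mem_window.1 (W_subset_window hi hw)).2.2.le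

theorem V_subset_Icc (hi : i < D.m) : ↑(D.V i) ⊆ Set.Icc (D.l i) (D.r i) := by
  intro v hv
  rw [Finset.mem_coe, D.hV i hi, Finset.mem_insert, Finset.mem_insert] at hv
  rcases hv with rfl | rfl | hw
  · exact ⟨le_rfl, l_le_r hi⟩
  · exact ⟨l_le_r hi, le_rfl⟩
  · exact ⟨(mem_window.1 (W_subset_window hi hw)).2.1.le, W_le_r hi hw⟩

theorem card_V_le (hi : i < D.m) : ((D.V i).card : ℝ) ≤ D.T / D.tm + 2 := by
  have hTtm : 0 ≤ D.T / D.tm := (div_pos D.hT D.htm).le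
  rw [D.hV i hi]
  by_cases hc : ((D.window i).card : ℝ) > D.T / D.tm
  · obtain ⟨-, hcard, -, hr, -⟩ := D.hstep_trunc i hi hc
    rw [Finset.insert_eq_self.2 hr]
    have hceil := Nat.ceil_lt_add_one hTtm
    calc ((insert (D.l i) (D.W i)).card : ℝ) ≤ (D.W i).card + 1 := by
          exact_mod_cast Finset.card_insert_le _ _
      _ ≤ D.T / D.tm + 2 := by rw [hcard]; linarith
  · have hW : ((D.W i).card : ℝ) ≤ D.T / D.tm := (D.hstep_no_trunc i hi hc).1 ▸ not_lt.1 hc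
    have hcard : (insert (D.l i) (insert (D.r i) (D.W i))).card ≤ (D.W i).card + 2 :=
      (Finset.card_insert_le _ _).trans (Nat.add_le_add_right (Finset.card_insert_le _ _) 1)
    calc ((insert (D.l i) (insert (D.r i) (D.W i))).card : ℝ) ≤ (D.W i).card + 2 := by
          exact_mod_cast hcard
      _ ≤ D.T / D.tm + 2 := by linarith

end StreetData

/-- If `3 * tm ≤ 2 * T`, then every path `V i` produced by the street construction has
cost `(max V i − min V i) + |V i| * tm` at most `4 * T`. -/
theorem stmt12 {X : Type*} [Fintype X] [Nonempty X] (D : StreetData X)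
    (h3 : 3 * D.tm ≤ 2 * D.T) :
    ∀ i < D.m, ∀ hne : (D.V i).Nonempty,
      (D.V i).max' hne - (D.V i).min' hne + (D.V i).card * D.tm ≤ 4 * D.T := by
  intro i hi hne
  have hspan : (D.V i).max' hne - (D.V i).min' hne ≤ D.T := by
    calc (D.V i).max' hne - (D.V i).min' hne ≤ D.r i - D.l i :=
          Finset.max'_sub_min'_le_of_subset_Icc hne (StreetData.V_subset_Icc hi)
      _ ≤ D.T := by linarith [(StreetData.r_le_min hi).trans (min_le_left _ _)]
  have hcount : ((D.V i).card : ℝ) * D.tm ≤ D.T + 2 * D.tm := by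
    calc ((D.V i).card : ℝ) * D.tm ≤ (D.T / D.tm + 2) * D.tm :=
          mul_le_mul_of_nonneg_right (StreetData.card_V_le hi) D.htm.le
      _ = D.T + 2 * D.tm := by field_simp [D.htm.ne']
  linarith [D.hT]
end

section
/- Let f : ℝ → ℝ be any function, let P = {p ∈ ℝ × ℝ : f(p.1) ≤ p.2} be the region on or above the terrain graph, let h ∈ ℝ be a fixed altitude, and let x ∈ P be a point with x.2 ≤ h. Then the set {u ∈ ℝ : the segment joining (u, h) to x is contained in P} is order-connected, i.e. an interval of ℝ. (A fixed-altitude path over a 1.5D terrain is chain-visible for any set of points on the terrain.) -/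
/-- Each point of the segment from `(b, h)` to `x` lies vertically above the point of the
segment from `(c, h)` to `x` with the same abscissa, since `x.2 ≤ h`. -/
theorem segment_subset_terrain_of_mem_segment {f : ℝ → ℝ} {h b c : ℝ} {x : ℝ × ℝ}
    (hxh : x.2 ≤ h) (hb : b ∈ segment ℝ x.1 c)
    (hc : segment ℝ (c, h) x ⊆ {p : ℝ × ℝ | f p.1 ≤ p.2}) :
    segment ℝ (b, h) x ⊆ {p : ℝ × ℝ | f p.1 ≤ p.2} := by
  obtain ⟨μ, l, hμ, hl, hμl, rfl⟩ := hb
  rintro q ⟨s, t, hs, ht, hst, rfl⟩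
  have hsl : s * l ≤ 1 := by nlinarith
  have hbelow : (s * l) • ((c, h) : ℝ × ℝ) + (1 - s * l) • x ∈ segment ℝ (c, h) x :=
    ⟨s * l, 1 - s * l, mul_nonneg hs hl, by linarith, by ring, rfl⟩
  have hfq := hc hbelow
  simp only [Set.mem_ofPred_eq, Prod.fst_add, Prod.snd_add, Prod.smul_fst, Prod.smul_snd,
    smul_eq_mul] at hfq ⊢
  have hsame : s * l * c + (1 - s * l) * x.1 = s * (μ * x.1 + l * c) + t * x.1 := by
    linear_combination (-x.1 * s) * hμl - x.1 * hst
  have hhigher : s * l * h + (1 - s * l) * x.2 ≤ s * h + t * x.2 := by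
    have hgap : s * h + t * x.2 - (s * l * h + (1 - s * l) * x.2) = s * μ * (h - x.2) := by
      linear_combination (s * x.2 - s * h) * hμl + x.2 * hst
    linarith [mul_nonneg (mul_nonneg hs hμ) (sub_nonneg.2 hxh)]
  rw [hsame] at hfq
  linarith

theorem stmt14_general (f : ℝ → ℝ) (h : ℝ) (x : ℝ × ℝ)
    (hxh : x.2 ≤ h) :
    Set.OrdConnected
      {u : ℝ | segment ℝ (u, h) x ⊆ {p : ℝ × ℝ | f p.1 ≤ p.2}} := by
  refine ⟨fun a ha c hc b hb => ?_⟩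
  rcases le_total x.1 b with hxb | hbx
  · exact segment_subset_terrain_of_mem_segment hxh (Icc_subset_segment ⟨hxb, hb.2⟩) hc
  · refine segment_subset_terrain_of_mem_segment hxh ?_ ha
    rw [segment_symm]
    exact Icc_subset_segment ⟨hb.1, hbx⟩

/-- A fixed-altitude path over a 1.5D terrain is chain-visible: for any terrain
function `f`, region `P = {p : f p.1 ≤ p.2}` on or above the terrain graph, altitude
`h`, and point `x ∈ P` with `x.2 ≤ h`, the set of abscissae `u` such that the segment
from `(u, h)` to `x` is contained in `P` is order-connected (an interval of ℝ). -/
theorem stmt14 (f : ℝ → ℝ) (h : ℝ) (x : ℝ × ℝ)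
    (hx : x ∈ {p : ℝ × ℝ | f p.1 ≤ p.2}) (hxh : x.2 ≤ h) :
    Set.OrdConnected
      {u : ℝ | segment ℝ (u, h) x ⊆ {p : ℝ × ℝ | f p.1 ≤ p.2}} :=
  stmt14_general f h x hxh
end

section
/- Let P be a compact subset of the plane ℝ × ℝ whose complement is connected (a model of a polygon without holes). If a, b, c are points such that the three segments joining a to b, b to c, and c to a are all contained in P, then the convex hull of {a, b, c} is contained in P. -/
/-!
The frontier of the triangle `T = conv {a, b, c}` lies on its three edges, hence in `P`. In the
collinear case `T` is one of the edges; otherwise `T` has interior points, and a frontier point `x`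
lies in an exposed face of `T` missing the interior, and an extreme subset of a triangle that
contains a point off the edges contains all three vertices. So the connected set `Pᶜ` does not
meet the frontier of `T`; since it contains points outside the bounded set `T`, it misses `T`.
-/

open Set Module

section Topology

variable {X : Type*} [TopologicalSpace X] {s t : Set X}

theorem IsPreconnected.subset_compl_of_disjoint_frontier (hs : IsPreconnected s)
    (ht : IsClosed t) (hfr : Disjoint s (frontier t)) (hst : (s \ t).Nonempty) : s ⊆ tᶜ :=
  hs.subset_of_closure_inter_subset ht.isOpen_compl hst fun x ⟨hxc, hxs⟩ hxt ↦
    hfr.notMem_of_mem_left hxs <| by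
      rw [frontier_eq_closure_inter_closure]; exact ⟨subset_closure hxt, hxc⟩

end Topology

section Convex

variable {E : Type*} [AddCommGroup E] [Module ℝ E]

theorem Convex.exists_isExposed_mem_disjoint_interior [TopologicalSpace E]
    [IsTopologicalAddGroup E] [ContinuousSMul ℝ E] {T : Set E} {x : E} (hT : Convex ℝ T)
    (hint : (interior T).Nonempty) (hxT : x ∈ T) (hx : x ∉ interior T) :
    ∃ F, IsExposed ℝ T F ∧ x ∈ F ∧ Disjoint F (interior T) := by
  obtain ⟨f, hf⟩ := geometric_hahn_banach_open_point hT.interior isOpen_interior hx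
  have hle : ∀ y ∈ T, f y ≤ f x := by
    have : closure (interior T) ⊆ {y | f y ≤ f x} :=
      closure_minimal (fun y hy ↦ (hf y hy).le) (isClosed_le f.continuous continuous_const)
    rw [hT.closure_interior_eq_closure_of_nonempty_interior hint] at this
    exact fun y hy ↦ this (subset_closure hy)
  refine ⟨f.toExposed T, ContinuousLinearMap.toExposed.isExposed, ⟨hxT, hle⟩, ?_⟩
  exact disjoint_left.2 fun y hyF hyi ↦ (hyF.2 x hxT).not_gt (hf y hyi)

variable {a b c : E}

theorem IsExtreme.subset_edges_or_vertices_subset {F : Set E}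
    (hF : IsExtreme ℝ (convexHull ℝ {a, b, c}) F) :
    F ⊆ segment ℝ a b ∪ segment ℝ b c ∪ segment ℝ c a ∨ {a, b, c} ⊆ F := by
  refine or_iff_not_imp_left.2 fun hsub ↦ ?_
  obtain ⟨x, hxF, hx⟩ := not_subset.1 hsub
  simp only [mem_union, not_or] at hx
  obtain ⟨⟨hxab, hxbc⟩, hxca⟩ := hx
  have hxT := hF.subset hxF
  rw [convexHull_insert (insert_nonempty b {c}), convexHull_pair, mem_convexJoin] at hxT
  obtain ⟨a', ha', z, hz, hxz⟩ := hxT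
  subst a'
  have hxaz : x ∈ openSegment ℝ a z := by
    refine mem_openSegment_of_ne_left_right ?_ ?_ hxz
    · rintro rfl; exact hxab (left_mem_segment ℝ _ b)
    · rintro rfl; exact hxbc hz
  have hzbc : z ∈ openSegment ℝ b c := by
    refine mem_openSegment_of_ne_left_right ?_ ?_ hz
    · rintro rfl; exact hxab hxz
    · rintro rfl; exact hxca (by rwa [segment_symm])
  have haT : a ∈ convexHull ℝ {a, b, c} := subset_convexHull ℝ _ (by simp)
  have hbT : b ∈ convexHull ℝ {a, b, c} := subset_convexHull ℝ _ (by simp)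
  have hcT : c ∈ convexHull ℝ {a, b, c} := subset_convexHull ℝ _ (by simp)
  have hzT : z ∈ convexHull ℝ {a, b, c} :=
    segment_subset_convexHull (by simp) (by simp) hz
  have hzF := hF.right_mem_of_mem_openSegment haT hzT hxF hxaz
  simp only [insert_subset_iff, singleton_subset_iff]
  exact ⟨hF.left_mem_of_mem_openSegment haT hzT hxF hxaz,
    hF.left_mem_of_mem_openSegment hbT hcT hzF hzbc,
    hF.right_mem_of_mem_openSegment hbT hcT hzF hzbc⟩

theorem Collinear.convexHull_subset_edges (h : Collinear ℝ {a, b, c}) :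
    convexHull ℝ {a, b, c} ⊆ segment ℝ a b ∪ segment ℝ b c ∪ segment ℝ c a := by
  rcases h.wbtw_or_wbtw_or_wbtw with h | h | h
  · refine (convexHull_min ?_ (convex_segment c a)).trans subset_union_right
    simp [insert_subset_iff, left_mem_segment, right_mem_segment, segment_symm ℝ c a,
      h.mem_segment]
  · refine (convexHull_min ?_ (convex_segment a b)).trans
      (subset_union_left.trans subset_union_left)
    simp [insert_subset_iff, left_mem_segment, right_mem_segment, segment_symm ℝ a b,
      h.mem_segment]
  · refine (convexHull_min ?_ (convex_segment b c)).trans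
      (subset_union_right.trans subset_union_left)
    simp [insert_subset_iff, left_mem_segment, right_mem_segment, segment_symm ℝ b c,
      h.mem_segment]

end Convex

section Plane

variable {E : Type*} [NormedAddCommGroup E] [NormedSpace ℝ E] [FiniteDimensional ℝ E]
  {a b c : E}

theorem interior_convexHull_nonempty_of_not_collinear (hE : finrank ℝ E = 2)
    (h : ¬ Collinear ℝ {a, b, c}) : (interior (convexHull ℝ {a, b, c})).Nonempty := by
  rw [interior_convexHull_nonempty_iff_affineSpan_eq_top]
  have hind : AffineIndependent ℝ ![a, b, c] := affineIndependent_iff_not_collinear_set.2 h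
  have hspan := hind.affineSpan_eq_top_iff_card_eq_finrank_add_one.2 (by simp [hE])
  rwa [show range ![a, b, c] = {a, b, c} by ext; simp [or_comm, or_left_comm]] at hspan

theorem frontier_convexHull_triple_subset (hE : finrank ℝ E = 2) :
    frontier (convexHull ℝ {a, b, c}) ⊆ segment ℝ a b ∪ segment ℝ b c ∪ segment ℝ c a := by
  intro x hx
  have hT : IsClosed (convexHull ℝ {a, b, c}) :=
    ((toFinite _).isCompact_convexHull ℝ).isClosed
  rw [hT.frontier_eq] at hx
  by_cases hcol : Collinear ℝ {a, b, c}
  · exact hcol.convexHull_subset_edges hx.1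
  have hint := interior_convexHull_nonempty_of_not_collinear hE hcol
  obtain ⟨F, hF, hxF, hFint⟩ :=
    (convex_convexHull ℝ _).exists_isExposed_mem_disjoint_interior hint hx.1 hx.2
  refine (hF.isExtreme.subset_edges_or_vertices_subset.resolve_right fun hv ↦ ?_) hxF
  have hTF : convexHull ℝ {a, b, c} ⊆ F := convexHull_min hv (hF.convex (convex_convexHull ℝ _))
  obtain ⟨w, hw⟩ := hint
  exact hFint.notMem_of_mem_left (hTF (interior_subset hw)) hw

end Plane

/-- In a compact subset `P` of the plane with connected complement (a model of a polygon
without holes), if the three segments joining `a`, `b`, `c` pairwise are contained in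
`P`, then the whole triangle (convex hull of `{a, b, c}`) is contained in `P`. -/
theorem stmt15 (P : Set (ℝ × ℝ)) (hP : IsCompact P) (hconn : IsConnected Pᶜ)
    (a b c : ℝ × ℝ) (hab : segment ℝ a b ⊆ P) (hbc : segment ℝ b c ⊆ P)
    (hca : segment ℝ c a ⊆ P) :
    convexHull ℝ ({a, b, c} : Set (ℝ × ℝ)) ⊆ P := by
  have hT : IsCompact (convexHull ℝ ({a, b, c} : Set (ℝ × ℝ))) :=
    (toFinite _).isCompact_convexHull ℝ
  have hfr : frontier (convexHull ℝ {a, b, c}) ⊆ P :=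
    (frontier_convexHull_triple_subset (by simp)).trans
      (union_subset (union_subset hab hbc) hca)
  obtain ⟨y, hy⟩ := (ne_univ_iff_exists_notMem _).1 (hP.union hT).ne_univ
  rw [mem_union, not_or] at hy
  exact compl_subset_compl.1 <| hconn.isPreconnected.subset_compl_of_disjoint_frontier
    hT.isClosed (disjoint_compl_left.mono_right hfr) ⟨y, hy⟩
end

section
/- Let V be a finite set with at least two elements and let σ be a permutation of V that is a single cycle through all of V (for all u, v ∈ V there exists n ≥ 0 with σ^n(u) = v). Let S, F ⊆ V be disjoint nonempty subsets such that σ(f) ∈ S for every f ∈ F and σ⁻¹(s) ∈ F for every s ∈ S. Then |S| = |F|, and for every s ∈ S, letting k be the least positive integer with σ^k(s) ∈ S ∪ F, we have σ^k(s) ∈ F. (Hence the cycle decomposes into |S| arcs, each beginning at an element of S, ending at an element of F, and containing no other element of S ∪ F; this is the decomposition of an optimal TSP tour on the Noon–Bean-transformed graph into one start-depot-to-finish-depot subtour per robot.) -/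
/-!
`σ⁻¹ : S → F` and `σ : F → S` are injections, so `|S| = |F|`. A permutation of a finite set has
finite order, so the orbit of `s ∈ S` returns to `s` and has a first positive time `k` at which it
meets `S ∪ F`. If `σ^k s ∈ S`, then `σ^(k-1) s = σ⁻¹ (σ^k s) ∈ F`; this is not `s ∈ S`, so
`0 < k - 1`, contradicting the minimality of `k`.
-/

open Finset

namespace Equiv.Perm

variable {α : Type*}

theorem card_eq_of_mapsTo_of_inv_mapsTo (σ : Perm α) {S F : Finset α}
    (hFS : ∀ f ∈ F, σ f ∈ S) (hSF : ∀ s ∈ S, σ⁻¹ s ∈ F) : #S = #F :=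
  le_antisymm (card_le_card_of_injOn (⇑σ⁻¹) hSF σ⁻¹.injective.injOn)
    (card_le_card_of_injOn σ hFS σ.injective.injOn)

theorem exists_pos_pow_apply_eq_self [Finite α] (σ : Perm α) (x : α) :
    ∃ n, 0 < n ∧ (σ ^ n) x = x :=
  ⟨orderOf σ, orderOf_pos σ, by rw [pow_orderOf_eq_one, one_apply]⟩

theorem pow_apply_mem_of_inv_mapsTo_of_isLeast [DecidableEq α] (σ : Perm α) {S F : Finset α}
    (hdisj : _root_.Disjoint S F) (hSF : ∀ s ∈ S, σ⁻¹ s ∈ F) {s : α} (hs : s ∈ S) {k : ℕ}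
    (hk : IsLeast {n | 0 < n ∧ (σ ^ n) s ∈ S ∪ F} k) : (σ ^ k) s ∈ F := by
  obtain ⟨⟨hk0, hkSF⟩, hmin⟩ := hk
  refine (mem_union.mp hkSF).resolve_left fun hkS => ?_
  obtain ⟨j, rfl⟩ := Nat.exists_eq_add_one_of_ne_zero hk0.ne'
  have hjF : (σ ^ j) s ∈ F := by simpa [pow_succ'] using hSF _ hkS
  rcases Nat.eq_zero_or_pos j with rfl | hj0
  · exact disjoint_left.mp hdisj hs (by simpa using hjF)
  · exact j.not_succ_le_self (hmin ⟨hj0, mem_union_right S hjF⟩)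

theorem exists_first_pow_apply_mem_union_mem_right [Finite α] [DecidableEq α] (σ : Perm α)
    {S F : Finset α} (hdisj : _root_.Disjoint S F) (hSF : ∀ s ∈ S, σ⁻¹ s ∈ F)
    {s : α} (hs : s ∈ S) :
    ∃ k, 0 < k ∧ (σ ^ k) s ∈ F ∧ ∀ j, 0 < j → j < k → (σ ^ j) s ∉ S ∪ F := by
  have hret : ∃ n, 0 < n ∧ (σ ^ n) s ∈ S ∪ F := by
    obtain ⟨n, hn0, hn⟩ := exists_pos_pow_apply_eq_self σ s
    exact ⟨n, hn0, by rw [hn]; exact mem_union_left F hs⟩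
  have hleast : IsLeast {n | 0 < n ∧ (σ ^ n) s ∈ S ∪ F} (Nat.find hret) :=
    ⟨Nat.find_spec hret, fun _ hn => Nat.find_min' hret hn⟩
  exact ⟨Nat.find hret, (Nat.find_spec hret).1,
    pow_apply_mem_of_inv_mapsTo_of_isLeast σ hdisj hSF hs hleast,
    fun j hj0 hjk hj => Nat.find_min hret hjk ⟨hj0, hj⟩⟩

end Equiv.Perm

theorem stmt17_general {V : Type*} [Fintype V] [DecidableEq V]
    (σ : Equiv.Perm V)
    (S F : Finset V) (hdisj : Disjoint S F)
    (hFS : ∀ f ∈ F, σ f ∈ S) (hSF : ∀ s ∈ S, σ⁻¹ s ∈ F) :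
    S.card = F.card ∧
      ∀ s ∈ S, ∃ k : ℕ, 0 < k ∧ (σ ^ k) s ∈ F ∧
        ∀ j : ℕ, 0 < j → j < k → (σ ^ j) s ∉ S ∪ F :=
  ⟨Equiv.Perm.card_eq_of_mapsTo_of_inv_mapsTo σ hFS hSF,
    fun _ hs => Equiv.Perm.exists_first_pow_apply_mem_union_mem_right σ hdisj hSF hs⟩

/-- Decomposition of a TSP tour on the Noon–Bean-transformed graph into depot-to-depot
subtours: let `σ` be a single cycle through a finite vertex set `V` with at least two
elements, and let `S` (start depots) and `F` (finish depots) be disjoint nonempty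
subsets such that `σ` maps `F` into `S` and `σ⁻¹` maps `S` into `F`.  Then `|S| = |F|`,
and for every `s ∈ S` the first return of the cycle from `s` to `S ∪ F` lands in `F`:
there is a least positive `k` with `σ^k s ∈ S ∪ F`, and `σ^k s ∈ F`. -/
theorem stmt17 {V : Type*} [Fintype V] [DecidableEq V] (h2 : 2 ≤ Fintype.card V)
    (σ : Equiv.Perm V) (hcyc : ∀ u v : V, ∃ n : ℕ, (σ ^ n) u = v)
    (S F : Finset V) (hdisj : Disjoint S F) (hS : S.Nonempty) (hF : F.Nonempty)
    (hFS : ∀ f ∈ F, σ f ∈ S) (hSF : ∀ s ∈ S, σ⁻¹ s ∈ F) :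
    S.card = F.card ∧
      ∀ s ∈ S, ∃ k : ℕ, 0 < k ∧ (σ ^ k) s ∈ F ∧
        ∀ j : ℕ, 0 < j → j < k → (σ ^ j) s ∉ S ∪ F :=
  stmt17_general σ S F hdisj hFS hSF
end

section
/- For every real c > 0 there exist a finite nonempty family of targets X with nonempty closed intervals C x = [a x, b x] ⊆ ℝ, a measurement time t_m > 0, a feasible collection of 2 paths of cost c₀ > 0, and a set G* ⊆ ℝ of minimum cardinality seeing every target, such that for every partition of G* into two nonempty parts V_1 and V_2, max(cost V_1, cost V_2) > c · c₀. (First computing a minimum set of discrete viewpoints and then splitting it into two paths can be arbitrarily worse than the optimal two-path solution.) -/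
/-!
Three targets with visibility intervals `[0, 0]`, `[M, 2M]` and `[2M + 1, 2M + 1]` are pairwise
disjoint, so a minimum viewpoint set has three points, and the one chosen here is `{0, M, 2M + 1}`.
Any split of it into two paths puts two of its points, at distance at least `M`, on one path.
The two paths `{0}` and `{2M, 2M + 1}`, however, already see all targets at cost
`max tm (1 + 2 tm)`, independent of `M`.
-/

open Finset

section Visibility

variable {X α : Type*} [LinearOrder α]

def Sees (a b : X → α) (S : Finset α) : Prop :=
  ∀ x, ∃ v ∈ S, a x ≤ v ∧ v ≤ b x

/-- If the visibility intervals are ordered left to right, no viewpoint sees two targets. -/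
theorem card_le_card_of_sees [Fintype X] [LinearOrder X] {a b : X → α}
    (hsep : ∀ i j, i < j → b i < a j) {S : Finset α} (hS : Sees a b S) :
    Fintype.card X ≤ #S := by
  choose v hvS hv using hS
  have hinj : Function.Injective v := by
    intro i j hij
    by_contra hne
    rcases lt_or_gt_of_ne hne with h | h
    · exact (hsep i j h).not_ge ((hv j).1.trans (hij ▸ (hv i).2))
    · exact (hsep j i h).not_ge ((hv i).1.trans (hij ▸ (hv j).2))
  rw [← card_univ]
  exact card_le_card_of_injOn v (fun i _ => hvS i) hinj.injOn

end Visibility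

theorem Finset.le_max'_sub_min' {α : Type*} [AddCommGroup α] [LinearOrder α]
    [IsOrderedAddMonoid α] {V : Finset α} (hV : V.Nonempty) {d : α}
    (hsep : ∀ u ∈ V, ∀ w ∈ V, u < w → d ≤ w - u) (hcard : 1 < #V) :
    d ≤ V.max' hV - V.min' hV := by
  obtain ⟨u, hu, w, hw, huw⟩ := one_lt_card.1 hcard
  rcases lt_or_gt_of_ne huw with h | h
  · exact (hsep u hu w hw h).trans (sub_le_sub (V.le_max' w hw) (V.min'_le u hu))
  · exact (hsep w hw u hu h).trans (sub_le_sub (V.le_max' u hu) (V.min'_le w hw))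

theorem Finset.one_lt_card_or_one_lt_card_of_disjoint {α : Type*} [DecidableEq α]
    {V₁ V₂ : Finset α} (hdis : Disjoint V₁ V₂) (hcard : 2 < #(V₁ ∪ V₂)) :
    1 < #V₁ ∨ 1 < #V₂ := by
  rw [card_union_of_disjoint hdis] at hcard
  omega

noncomputable def pathCost (tm : ℝ) (V : Finset ℝ) (hV : V.Nonempty) : ℝ :=
  V.max' hV - V.min' hV + #V * tm

theorem pathCost_singleton (tm v : ℝ) : pathCost tm {v} (singleton_nonempty v) = tm := by
  simp [pathCost]

theorem pathCost_pair (tm : ℝ) {u v : ℝ} (huv : u < v) (h : ({u, v} : Finset ℝ).Nonempty) :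
    pathCost tm {u, v} h = v - u + 2 * tm := by
  simp [pathCost, card_pair huv.ne, max_eq_right huv.le, min_eq_left huv.le]

theorem add_two_mul_le_pathCost {tm : ℝ} (htm : 0 ≤ tm) {V : Finset ℝ} (hV : V.Nonempty)
    {d : ℝ} (hsep : ∀ u ∈ V, ∀ w ∈ V, u < w → d ≤ w - u) (hcard : 1 < #V) :
    d + 2 * tm ≤ pathCost tm V hV := by
  have hdiam := V.le_max'_sub_min' hV hsep hcard
  have hcard' : (2 : ℝ) ≤ #V := by exact_mod_cast hcard
  unfold pathCost
  nlinarith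

section Gadget

variable {M : ℝ}

def gadgetLeft (M : ℝ) : Fin 3 → ℝ := ![0, M, 2 * M + 1]

def gadgetRight (M : ℝ) : Fin 3 → ℝ := ![0, 2 * M, 2 * M + 1]

noncomputable def gadgetPaths (M : ℝ) : Fin 2 → Finset ℝ := ![{0}, {2 * M, 2 * M + 1}]

noncomputable def gadgetViewpoints (M : ℝ) : Finset ℝ := {0, M, 2 * M + 1}

theorem gadgetLeft_le_gadgetRight (hM : 0 ≤ M) (x : Fin 3) :
    gadgetLeft M x ≤ gadgetRight M x := by
  fin_cases x <;> simp [gadgetLeft, gadgetRight, two_mul, hM]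

theorem gadgetRight_lt_gadgetLeft (hM : 0 < M) (i j : Fin 3) (hij : i < j) :
    gadgetRight M i < gadgetLeft M j := by
  fin_cases i <;> fin_cases j <;> simp [gadgetLeft, gadgetRight] at hij ⊢ <;> linarith

theorem gadgetPaths_nonempty (i : Fin 2) : (gadgetPaths M i).Nonempty := by
  fin_cases i <;> simp [gadgetPaths]

theorem gadgetPaths_sees (hM : 0 ≤ M) (x : Fin 3) :
    ∃ i, ∃ v ∈ gadgetPaths M i, gadgetLeft M x ≤ v ∧ v ≤ gadgetRight M x := by
  fin_cases x
  · exact ⟨0, 0, by simp [gadgetPaths], by simp [gadgetLeft, gadgetRight]⟩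
  · exact ⟨1, 2 * M, by simp [gadgetPaths], by simp [gadgetLeft, gadgetRight]; linarith⟩
  · exact ⟨1, 2 * M + 1, by simp [gadgetPaths], by simp [gadgetLeft, gadgetRight]⟩

theorem max_pathCost_gadgetPaths :
    max (pathCost 1 (gadgetPaths M 0) (gadgetPaths_nonempty 0))
      (pathCost 1 (gadgetPaths M 1) (gadgetPaths_nonempty 1)) = 3 := by
  simp only [gadgetPaths, Matrix.cons_val_zero, Matrix.cons_val_one, pathCost_singleton,
    pathCost_pair 1 (lt_add_one (2 * M))]
  norm_num

theorem gadgetViewpoints_sees (hM : 0 ≤ M) :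
    Sees (gadgetLeft M) (gadgetRight M) (gadgetViewpoints M) := by
  intro x
  fin_cases x
  · exact ⟨0, by simp [gadgetViewpoints], by simp [gadgetLeft, gadgetRight]⟩
  · exact ⟨M, by simp [gadgetViewpoints], by simp [gadgetLeft, gadgetRight]; linarith⟩
  · exact ⟨2 * M + 1, by simp [gadgetViewpoints], by simp [gadgetLeft, gadgetRight]⟩

theorem card_gadgetViewpoints (hM : 0 < M) : #(gadgetViewpoints M) = 3 := by
  rw [gadgetViewpoints, card_insert_of_notMem, card_pair]
  · exact (by linarith : M < 2 * M + 1).ne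
  · simp only [mem_insert, mem_singleton, not_or]
    constructor <;> linarith

theorem gadgetViewpoints_separated (hM : 0 < M) :
    ∀ u ∈ gadgetViewpoints M, ∀ w ∈ gadgetViewpoints M, u < w → M ≤ w - u := by
  simp only [gadgetViewpoints, mem_insert, mem_singleton]
  rintro u (rfl | rfl | rfl) w (rfl | rfl | rfl) huw <;> linarith

end Gadget

/-- First computing a minimum set of discrete viewpoints and then splitting it into two
paths can be arbitrarily worse than the optimal two-path solution: for every `c > 0`
there are a finite nonempty family of targets with visibility intervals `[a x, b x]`, a
measurement time `tm > 0`, a feasible collection of two paths of cost `c₀ > 0` (cost of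
a path `V` is `(max V − min V) + |V| * tm`, cost of the collection is the max of the two
path costs), and a minimum-cardinality set `G` seeing every target, such that every
partition of `G` into two nonempty parts `V₁, V₂` satisfies
`max (cost V₁) (cost V₂) > c * c₀`. -/
theorem stmt18 (c : ℝ) (hc : 0 < c) :
    ∃ (X : Type) (_ : Fintype X) (_ : Nonempty X) (a b : X → ℝ) (_ : ∀ x, a x ≤ b x)
      (tm : ℝ) (_ : 0 < tm) (P : Fin 2 → Finset ℝ) (hP : ∀ i, (P i).Nonempty)
      (c0 : ℝ),
      0 < c0 ∧
      (∀ x : X, ∃ i, ∃ v ∈ P i, a x ≤ v ∧ v ≤ b x) ∧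
      c0 = max ((P 0).max' (hP 0) - (P 0).min' (hP 0) + (P 0).card * tm)
              ((P 1).max' (hP 1) - (P 1).min' (hP 1) + (P 1).card * tm) ∧
      ∃ G : Finset ℝ,
        (∀ x : X, ∃ v ∈ G, a x ≤ v ∧ v ≤ b x) ∧
        (∀ S : Finset ℝ, (∀ x : X, ∃ v ∈ S, a x ≤ v ∧ v ≤ b x) → G.card ≤ S.card) ∧
        ∀ V₁ V₂ : Finset ℝ, Disjoint V₁ V₂ → V₁ ∪ V₂ = G →
          ∀ (h₁ : V₁.Nonempty) (h₂ : V₂.Nonempty),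
            c * c0 < max (V₁.max' h₁ - V₁.min' h₁ + V₁.card * tm)
                        (V₂.max' h₂ - V₂.min' h₂ + V₂.card * tm) := by
  set M := 3 * c + 1
  have hM : 0 < M := by positivity
  refine ⟨Fin 3, inferInstance, inferInstance, gadgetLeft M, gadgetRight M,
    gadgetLeft_le_gadgetRight hM.le, 1, one_pos, gadgetPaths M, gadgetPaths_nonempty, 3,
    three_pos, gadgetPaths_sees hM.le, max_pathCost_gadgetPaths.symm, gadgetViewpoints M,
    gadgetViewpoints_sees hM.le, fun S hS => ?_, fun V₁ V₂ hdis hunion h₁ h₂ => ?_⟩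
  · simpa [card_gadgetViewpoints hM] using card_le_card_of_sees (gadgetRight_lt_gadgetLeft hM) hS
  · have hsep {V} (hV : V ⊆ gadgetViewpoints M) :=
      fun u hu w hw => gadgetViewpoints_separated hM u (hV hu) w (hV hw)
    have hcard : 2 < #(V₁ ∪ V₂) := by rw [hunion, card_gadgetViewpoints hM]; norm_num
    rcases one_lt_card_or_one_lt_card_of_disjoint hdis hcard with h | h
    · have hcost := add_two_mul_le_pathCost zero_le_one h₁ (hsep (hunion ▸ subset_union_left)) h
      exact lt_max_of_lt_left (by unfold pathCost at hcost; linarith)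
    · have hcost := add_two_mul_le_pathCost zero_le_one h₂ (hsep (hunion ▸ subset_union_right)) h
      exact lt_max_of_lt_right (by unfold pathCost at hcost; linarith)
end
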